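/- arXiv:2507.17142 — 6 statements merged into one kernel-verified Lean document; each statement's English description precedes it below -/
import Mathlib

section
/- For every integer n ≥ 6 and every pair 1 ≤ i < j ≤ n, the number of elements w of the standard family Fₙ with δ(v_{i,j}, w) = 1 is at most 4, where δ(v,w) := min(d(v,w), n − d(v,w)) and d is the Hamming distance. -/
/-- Indicator vector of the set of labels {i, i+1, …, j−1}, coordinates labelled 1,…,n. -/
def stdVec (n i j : ℕ) : Fin n → ZMod 2 :=
  fun k => if i ≤ k.val + 1 ∧ k.val + 1 < j then 1 else 0

/-- δ(v,w) = min(d(v,w), n − d(v,w)), where d is the Hamming distance. -/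
def hdelta {n : ℕ} (v w : Fin n → ZMod 2) : ℕ :=
  min (hammingDist v w) (n - hammingDist v w)

/-- The standard family Fₙ: the zero vector together with the vectors v_{i,j}
for 1 ≤ i < j ≤ n. -/
def stdFamily (n : ℕ) : Finset (Fin n → ZMod 2) :=
  insert 0 ((((Finset.Icc 1 n) ×ˢ (Finset.Icc 1 n)).filter fun p => p.1 < p.2).image
    fun p => stdVec n p.1 p.2)


/-!
A vector `w` of the family vanishes at label `n`, like `v = v_{i,j}`, so `δ(v, w) = 1` means that
`w` differs from `v` either in exactly one label `c`, or in every label but `n`. In the first case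
`w` is still an interval only if `c` is an endpoint of `[i, j)` or adjacent to one, which leaves
the four candidates `[i-1, j)`, `[i+1, j)`, `[i, j-1)`, `[i, j+1)`. In the second case `w` is the
complement of `[i, j)` in `[1, n)`, an interval only when `i = 1` or `j = n`, and exactly then one
of the outer candidates `[i-1, j)` or `[i, j+1)` is not available.
-/

open Finset

section Hamming

variable {ι β : Type*} [Fintype ι] [DecidableEq β] {x y : ι → β}

theorem exists_forall_eq_iff_ne_of_hammingDist_eq_one (h : hammingDist x y = 1) :
    ∃ k, ∀ m, x m = y m ↔ m ≠ k := by
  obtain ⟨k, hk⟩ := card_eq_one.1 h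
  refine ⟨k, fun m => ?_⟩
  have := Finset.ext_iff.1 hk m
  simp only [mem_filter, mem_univ, true_and, mem_singleton] at this
  tauto

theorem forall_eq_iff_eq_of_hammingDist_eq_card_sub_one [DecidableEq ι] {k : ι}
    (hk : x k = y k) (h : hammingDist x y = Fintype.card ι - 1) :
    ∀ m, x m = y m ↔ m = k := by
  have hsub : univ.filter (fun m => x m ≠ y m) ⊆ univ.erase k := fun m hm =>
    mem_erase.2 ⟨fun hmk => (mem_filter.1 hm).2 (hmk ▸ hk), mem_univ m⟩
  have heq := eq_of_subset_of_card_le hsub <| by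
    rw [card_erase_of_mem (mem_univ k), card_univ]
    exact h.ge
  intro m
  have := Finset.ext_iff.1 heq m
  simp only [mem_filter, mem_univ, true_and, mem_erase, and_true] at this
  tauto

end Hamming

theorem hammingDist_eq_one_or_eq_sub_one_of_hdelta_eq_one {n : ℕ} {v w : Fin n → ZMod 2}
    (h : hdelta v w = 1) : hammingDist v w = 1 ∨ hammingDist v w = n - 1 := by
  have hle : hammingDist v w ≤ n := by
    simpa using hammingDist_le_card_fintype (x := v) (y := w)
  unfold hdelta at h
  omega

section StdVec

variable {n a b c d : ℕ}

theorem stdVec_apply_eq_iff (k : Fin n) :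
    stdVec n a b k = stdVec n c d k ↔ (a ≤ k + 1 ∧ k + 1 < b ↔ c ≤ k + 1 ∧ k + 1 < d) := by
  unfold stdVec
  split_ifs <;> simp only [one_ne_zero, zero_ne_one, true_iff, false_iff] <;> tauto

theorem stdVec_congr (h : ∀ m < n, (a ≤ m + 1 ∧ m + 1 < b ↔ c ≤ m + 1 ∧ m + 1 < d)) :
    stdVec n a b = stdVec n c d :=
  funext fun k => (stdVec_apply_eq_iff k).2 (h k k.2)

theorem exists_eq_stdVec_of_mem_stdFamily {w : Fin n → ZMod 2} (hw : w ∈ stdFamily n) :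
    ∃ a b, b ≤ n ∧ w = stdVec n a b := by
  simp only [stdFamily, mem_insert, mem_image, mem_filter, mem_product, mem_Icc] at hw
  rcases hw with rfl | ⟨⟨a, b⟩, ⟨⟨-, -, hb⟩, -⟩, rfl⟩
  · exact ⟨0, 0, Nat.zero_le n, funext fun k => by simp [stdVec]⟩
  · exact ⟨a, b, hb, rfl⟩

end StdVec

/-- The intervals `[i-1, j)`, `[i+1, j)`, `[i, j-1)`, `[i, j+1)`, where an outer one that does not
fit into the labels `1, …, n-1` is replaced by the complement of `[i, j)` in `[1, n)`. -/
def stdNeighbours (n i j : ℕ) : Finset (Fin n → ZMod 2) :=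
  {if i = 1 then stdVec n j n else stdVec n (i - 1) j, stdVec n (i + 1) j, stdVec n i (j - 1),
    if j = n then stdVec n 1 i else stdVec n i (j + 1)}

section Neighbours

variable {n i j a b : ℕ}

theorem stdVec_mem_stdNeighbours_of_differ_only_at (hi : 1 ≤ i) (hij : i < j) (hj : j ≤ n)
    (hb : b ≤ n) {c : ℕ} (hc : c < n)
    (H : ∀ m < n, ((a ≤ m + 1 ∧ m + 1 < b ↔ i ≤ m + 1 ∧ m + 1 < j) ↔ m ≠ c)) :
    stdVec n a b ∈ stdNeighbours n i j := by
  -- the only label `c + 1` where `[a, b)` and `[i, j)` differ is `i - 1`, `i`, `j - 1` or `j`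
  have hcases : c + 2 = i ∨ c + 1 = i ∨ c + 2 = j ∨ (c + 1 = j ∧ j < n) := by
    have := H c hc
    have := H (c - 1) (by omega)
    have := H (min (c + 1) (n - 1)) (by omega)
    have := H (i - 1) (by omega)
    have := H (j - 1) (by omega)
    have := H (n - 1) (by omega)
    omega
  simp only [stdNeighbours, mem_insert, mem_singleton]
  rcases hcases with hc | hc | hc | ⟨hc, hjn⟩
  · refine .inl ?_
    rw [if_neg (by omega)]
    exact stdVec_congr fun m hm => by have := H m hm; omega
  · exact .inr <| .inl <| stdVec_congr fun m hm => by have := H m hm; omega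
  · exact .inr <| .inr <| .inl <| stdVec_congr fun m hm => by have := H m hm; omega
  · refine .inr <| .inr <| .inr ?_
    rw [if_neg (by omega)]
    exact stdVec_congr fun m hm => by have := H m hm; omega

theorem stdVec_mem_stdNeighbours_of_agree_only_at_last (hi : 1 ≤ i) (hij : i < j) (hj : j ≤ n)
    (H : ∀ m < n, ((a ≤ m + 1 ∧ m + 1 < b ↔ i ≤ m + 1 ∧ m + 1 < j) ↔ m = n - 1)) :
    stdVec n a b ∈ stdNeighbours n i j := by
  simp only [stdNeighbours, mem_insert, mem_singleton]
  by_cases hi1 : i = 1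
  · refine .inl ?_
    rw [if_pos hi1]
    exact stdVec_congr fun m hm => by have := H m hm; omega
  by_cases hjn : j = n
  · refine .inr <| .inr <| .inr ?_
    rw [if_pos hjn]
    exact stdVec_congr fun m hm => by have := H m hm; omega
  -- the complement of `[i, j)` in `[1, n)` would contain `1` and `n - 1` but not `i`
  have := H 0 (by omega)
  have := H (i - 1) (by omega)
  have := H (n - 2) (by omega)
  omega

theorem stdVec_mem_stdNeighbours_of_hammingDist_eq_one (hi : 1 ≤ i) (hij : i < j) (hj : j ≤ n)
    (hb : b ≤ n) (h : hammingDist (stdVec n i j) (stdVec n a b) = 1) :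
    stdVec n a b ∈ stdNeighbours n i j := by
  obtain ⟨c, hc⟩ := exists_forall_eq_iff_ne_of_hammingDist_eq_one h
  refine stdVec_mem_stdNeighbours_of_differ_only_at hi hij hj hb c.2 fun m hm => ?_
  have := hc ⟨m, hm⟩
  rw [stdVec_apply_eq_iff, Fin.ne_iff_vne] at this
  tauto

theorem stdVec_mem_stdNeighbours_of_hammingDist_eq_sub_one (hi : 1 ≤ i) (hij : i < j)
    (hj : j ≤ n) (hb : b ≤ n) (h : hammingDist (stdVec n i j) (stdVec n a b) = n - 1) :
    stdVec n a b ∈ stdNeighbours n i j := by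
  let last : Fin n := ⟨n - 1, by omega⟩
  have hlast : stdVec n i j last = stdVec n a b last := by
    rw [stdVec_apply_eq_iff]
    simp only [last]
    omega
  have hagree := forall_eq_iff_eq_of_hammingDist_eq_card_sub_one hlast
    (by rwa [Fintype.card_fin])
  refine stdVec_mem_stdNeighbours_of_agree_only_at_last hi hij hj fun m hm => ?_
  have := hagree ⟨m, hm⟩
  rw [stdVec_apply_eq_iff, Fin.ext_iff] at this
  tauto

end Neighbours

theorem stmt_5_general (n i j : ℕ) (hi : 1 ≤ i) (hij : i < j) (hj : j ≤ n) :
    ((stdFamily n).filter fun w => hdelta (stdVec n i j) w = 1).card ≤ 4 := by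
  have hsub : (stdFamily n).filter (fun w => hdelta (stdVec n i j) w = 1) ⊆
      stdNeighbours n i j := by
    intro w hw
    obtain ⟨hw, hδ⟩ := mem_filter.1 hw
    obtain ⟨a, b, hb, rfl⟩ := exists_eq_stdVec_of_mem_stdFamily hw
    rcases hammingDist_eq_one_or_eq_sub_one_of_hdelta_eq_one hδ with h | h
    · exact stdVec_mem_stdNeighbours_of_hammingDist_eq_one hi hij hj hb h
    · exact stdVec_mem_stdNeighbours_of_hammingDist_eq_sub_one hi hij hj hb h
  exact (card_le_card hsub).trans card_le_four

theorem stmt_5 (n i j : ℕ) (hn : 6 ≤ n) (hi : 1 ≤ i) (hij : i < j) (hj : j ≤ n) :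
    ((stdFamily n).filter fun w => hdelta (stdVec n i j) w = 1).card ≤ 4 :=
  stmt_5_general n i j hi hij hj
end

section
/- Let n ≥ 6 be an integer and let i, j satisfy 1 < i, i + 1 < j, and j < n. Then the set of elements w of the standard family Fₙ with δ(v_{i,j}, w) = 1 is exactly {v_{i−1,j}, v_{i+1,j}, v_{i,j−1}, v_{i,j+1}}, where δ(v,w) := min(d(v,w), n − d(v,w)) and d is the Hamming distance. -/
open scoped symmDiff

lemma card_symmDiff' (s t : Finset ℕ) :
    (s ∆ t).card = s.card + t.card - 2 * (s ∩ t).card := by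
  have h1 := Finset.card_inter_add_card_sdiff s t
  have h2 := Finset.card_inter_add_card_sdiff t s
  have hdisj : Disjoint (s \ t) (t \ s) := disjoint_sdiff_sdiff
  rw [symmDiff_def, Finset.sup_eq_union, Finset.card_union_of_disjoint hdisj]
  rw [Finset.inter_comm] at h2
  omega

lemma key (n i j a b : ℕ) (hi : 1 ≤ i) (hj : j ≤ n) (ha : 1 ≤ a) (hb : b ≤ n) :
    hammingDist (stdVec n i j) (stdVec n a b)
      = (j - i) + (b - a) - 2 * (min j b - max i a) := by
  have hcard : hammingDist (stdVec n i j) (stdVec n a b)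
      = ((Finset.Ico i j) ∆ (Finset.Ico a b)).card := by
    rw [hammingDist]
    apply Finset.card_bij (fun k _ => k.val + 1)
    · intro k hk
      simp only [Finset.mem_filter, Finset.mem_univ, true_and] at hk
      simp only [stdVec] at hk
      rw [Finset.mem_symmDiff]
      simp only [Finset.mem_Ico]
      by_cases h1 : i ≤ k.val + 1 ∧ k.val + 1 < j <;>
        by_cases h2 : a ≤ k.val + 1 ∧ k.val + 1 < b <;>
        simp [h1, h2] at hk ⊢
    · intro k1 _ k2 _ h
      exact Fin.ext (by omega)
    · intro m hm
      rw [Finset.mem_symmDiff] at hm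
      simp only [Finset.mem_Ico] at hm
      have hm1 : 1 ≤ m := by omega
      have hmn : m - 1 < n := by omega
      refine ⟨⟨m - 1, hmn⟩, ?_, by simp; omega⟩
      simp only [Finset.mem_filter, Finset.mem_univ, true_and]
      simp only [stdVec]
      have : m - 1 + 1 = m := by omega
      rw [this]
      rcases hm with ⟨h1, h2⟩ | ⟨h1, h2⟩ <;> simp [h1, h2]
  rw [hcard, card_symmDiff', Finset.Ico_inter_Ico, Nat.card_Ico, Nat.card_Ico, Nat.card_Ico]

theorem stmt_6 (n i j : ℕ) (hn : 6 ≤ n) (hi : 1 < i) (hij : i + 1 < j) (hj : j < n) :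
    (stdFamily n).filter (fun w => hdelta (stdVec n i j) w = 1) =
      {stdVec n (i - 1) j, stdVec n (i + 1) j, stdVec n i (j - 1), stdVec n i (j + 1)} := by
  have hz : (0 : Fin n → ZMod 2) = stdVec n 1 1 := by
    funext k; simp [stdVec]
  ext w
  simp only [Finset.mem_filter, stdFamily, Finset.mem_insert, Finset.mem_image,
    Finset.mem_filter, Finset.mem_product, Finset.mem_Icc]
  constructor
  · rintro ⟨h0 | ⟨⟨a, b⟩, ⟨⟨⟨ha1, han⟩, hb1, hbn⟩, hab⟩, rfl⟩, hd⟩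
    · exfalso
      rw [h0, hz] at hd
      rw [hdelta, key n i j 1 1 (by omega) (by omega) (by omega) (by omega)] at hd
      omega
    · rw [hdelta, key n i j a b (by omega) (by omega) (by omega) (by omega)] at hd
      have : (a = i - 1 ∧ b = j) ∨ (a = i + 1 ∧ b = j) ∨ (a = i ∧ b = j - 1) ∨
          (a = i ∧ b = j + 1) := by omega
      rcases this with ⟨rfl, rfl⟩ | ⟨rfl, rfl⟩ | ⟨rfl, rfl⟩ | ⟨rfl, rfl⟩ <;> simp
  · intro hw
    simp only [Finset.mem_insert, Finset.mem_singleton] at hw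
    have main : ∀ a b : ℕ, 1 ≤ a → b ≤ n → a < b →
        ((a = i - 1 ∧ b = j) ∨ (a = i + 1 ∧ b = j) ∨ (a = i ∧ b = j - 1) ∨
          (a = i ∧ b = j + 1)) →
        (stdVec n a b = 0 ∨ ∃ p : ℕ × ℕ, (((1 ≤ p.1 ∧ p.1 ≤ n) ∧ 1 ≤ p.2 ∧ p.2 ≤ n) ∧
            p.1 < p.2) ∧ stdVec n p.1 p.2 = stdVec n a b) ∧
          hdelta (stdVec n i j) (stdVec n a b) = 1 := by
      intro a b ha hb hab hcase
      constructor
      · exact Or.inr ⟨(a, b), ⟨⟨⟨ha, by omega⟩, by omega, hb⟩, hab⟩, rfl⟩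
      · rw [hdelta, key n i j a b (by omega) (by omega) (by omega) (by omega)]
        omega
    rcases hw with rfl | rfl | rfl | rfl
    · exact main (i-1) j (by omega) (by omega) (by omega) (by omega)
    · exact main (i+1) j (by omega) (by omega) (by omega) (by omega)
    · exact main i (j-1) (by omega) (by omega) (by omega) (by omega)
    · exact main i (j+1) (by omega) (by omega) (by omega) (by omega)
end

section
/- Let n ≥ 6 be an integer and let i satisfy 1 < i and i + 1 < n. Then the set of elements w of the standard family Fₙ with δ(v_{i,i+1}, w) = 1 is exactly {0, v_{i−1,i+1}, v_{i,i+2}}, where δ(v,w) := min(d(v,w), n − d(v,w)) and d is the Hamming distance. -/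
/-!
The vector `v_{i,i+1}` is the indicator of the single label `i`, so its Hamming distance to
`v_{a,b}` is `b - a - 1` if `a ≤ i < b` and `b - a + 1` otherwise. Since `b - a ≤ n - 1`,
`δ = 1` forces either `b - a = 2` with `i` inside `[a, b)`, or `b - a ∈ {0, n - 2}` with `i`
outside; an interval of length `n - 2` inside `[1, n]` contains every label `2 ≤ i ≤ n - 2`,
so only the zero vector and the two intervals of length two around `i` remain.
-/

open Finset

lemma stdVec_self (n a : ℕ) : stdVec n a a = 0 := by
  funext k
  simp only [stdVec, Pi.zero_apply, ite_eq_right_iff]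
  omega

lemma stdVec_apply_ne_iff {n : ℕ} (i j a b : ℕ) (k : Fin n) :
    stdVec n i j k ≠ stdVec n a b k ↔
      ¬((i ≤ k.val + 1 ∧ k.val + 1 < j) ↔ (a ≤ k.val + 1 ∧ k.val + 1 < b)) := by
  unfold stdVec
  split_ifs with h₁ h₂ h₂ <;> simp [h₁, h₂]

lemma hammingDist_stdVec (n i j a b : ℕ) :
    hammingDist (stdVec n i j) (stdVec n a b) =
      #{m ∈ range n | ¬((i ≤ m + 1 ∧ m + 1 < j) ↔ (a ≤ m + 1 ∧ m + 1 < b))} := by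
  simp only [hammingDist, stdVec_apply_ne_iff, card_filter]
  exact Fin.sum_univ_eq_sum_range
    (fun m => if ¬((i ≤ m + 1 ∧ m + 1 < j) ↔ (a ≤ m + 1 ∧ m + 1 < b)) then 1 else 0) n

lemma hammingDist_stdVec_succ {n i a b : ℕ} (hi : 1 ≤ i) (hin : i < n) (ha : 1 ≤ a)
    (hab : a ≤ b) (hb : b ≤ n) :
    hammingDist (stdVec n i (i + 1)) (stdVec n a b) =
      if a ≤ i ∧ i < b then b - a - 1 else b - a + 1 := by
  rw [hammingDist_stdVec]
  split_ifs with h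
  · have hset : {m ∈ range n | ¬((i ≤ m + 1 ∧ m + 1 < i + 1) ↔ (a ≤ m + 1 ∧ m + 1 < b))} =
        (Ico (a - 1) (b - 1)).erase (i - 1) := by
      ext m
      simp only [mem_filter, mem_range, mem_erase, mem_Ico]
      omega
    rw [hset, card_erase_of_mem (by simp only [mem_Ico]; omega), Nat.card_Ico]
    omega
  · have hset : {m ∈ range n | ¬((i ≤ m + 1 ∧ m + 1 < i + 1) ↔ (a ≤ m + 1 ∧ m + 1 < b))} =
        insert (i - 1) (Ico (a - 1) (b - 1)) := by
      ext m
      simp only [mem_filter, mem_range, mem_insert, mem_Ico]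
      omega
    rw [hset, card_insert_of_notMem (by simp only [mem_Ico]; omega), Nat.card_Ico]
    omega

lemma hdelta_stdVec_succ_eq_one_iff {n i a b : ℕ} (hi : 1 < i) (hin : i + 1 < n)
    (ha : 1 ≤ a) (hab : a ≤ b) (hb : b ≤ n) :
    hdelta (stdVec n i (i + 1)) (stdVec n a b) = 1 ↔
      a = b ∨ (a = i - 1 ∧ b = i + 1) ∨ (a = i ∧ b = i + 2) := by
  rw [hdelta, hammingDist_stdVec_succ (by omega) (by omega) ha hab hb]
  split_ifs <;> omega

theorem stmt_7_general (n i : ℕ) (hi : 1 < i) (hi' : i + 1 < n) :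
    (stdFamily n).filter (fun w => hdelta (stdVec n i (i + 1)) w = 1) =
      {0, stdVec n (i - 1) (i + 1), stdVec n i (i + 2)} := by
  ext w
  simp only [stdFamily, mem_filter, mem_insert, mem_image, mem_product, mem_Icc,
    mem_singleton, Prod.exists]
  constructor
  · rintro ⟨rfl | ⟨a, b, ⟨⟨⟨ha, -⟩, -, hb⟩, hab⟩, rfl⟩, hδ⟩
    · exact Or.inl rfl
    · rcases (hdelta_stdVec_succ_eq_one_iff hi hi' ha hab.le hb).mp hδ with
        h | ⟨rfl, rfl⟩ | ⟨rfl, rfl⟩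
      · omega
      · exact Or.inr (Or.inl rfl)
      · exact Or.inr (Or.inr rfl)
  · rintro (rfl | rfl | rfl)
    · refine ⟨Or.inl rfl, ?_⟩
      rw [← stdVec_self n 1, hdelta_stdVec_succ_eq_one_iff hi hi' le_rfl le_rfl (by omega)]
      exact Or.inl rfl
    · refine ⟨Or.inr ⟨i - 1, i + 1, by omega, rfl⟩, ?_⟩
      rw [hdelta_stdVec_succ_eq_one_iff hi hi' (by omega) (by omega) (by omega)]
      omega
    · refine ⟨Or.inr ⟨i, i + 2, by omega, rfl⟩, ?_⟩
      rw [hdelta_stdVec_succ_eq_one_iff hi hi' (by omega) (by omega) (by omega)]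
      omega

theorem stmt_7 (n i : ℕ) (hn : 6 ≤ n) (hi : 1 < i) (hi' : i + 1 < n) :
    (stdFamily n).filter (fun w => hdelta (stdVec n i (i + 1)) w = 1) =
      {0, stdVec n (i - 1) (i + 1), stdVec n i (i + 2)} :=
  stmt_7_general n i hi hi'
end

section
/- Let n ≥ 6 be an integer. Then the set of elements w of the standard family Fₙ with δ(v_{1,2}, w) = 1 is exactly {0, v_{1,3}, v_{2,n}}, where δ(v,w) := min(d(v,w), n − d(v,w)) and d is the Hamming distance. -/
lemma card_filter_val (n : ℕ) (s : Finset ℕ) (hs : ∀ m ∈ s, m < n) :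
    (Finset.univ.filter (fun k : Fin n => k.val ∈ s)).card = s.card := by
  rw [show (Finset.univ.filter (fun k : Fin n => k.val ∈ s)) = s.attachFin hs from ?_,
    Finset.card_attachFin]
  ext k; simp [Finset.mem_attachFin]

lemma stdVec_dist_zero (n : ℕ) (hn : 1 ≤ n) : hammingDist (stdVec n 1 2) 0 = 1 := by
  have h : hammingDist (stdVec n 1 2) 0 =
      (Finset.univ.filter (fun k : Fin n => k.val ∈ ({0} : Finset ℕ))).card := by
    unfold hammingDist
    congr 1
    apply Finset.filter_congr
    intro k _
    simp only [stdVec, Pi.zero_apply, Finset.mem_singleton]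
    split_ifs with h1 <;> simp <;> omega
  rw [h, card_filter_val _ _ (by simp; omega), Finset.card_singleton]

lemma stdVec_dist_one (n j : ℕ) (h2 : 2 ≤ j) (hjn : j ≤ n) :
    hammingDist (stdVec n 1 2) (stdVec n 1 j) = j - 2 := by
  have h : hammingDist (stdVec n 1 2) (stdVec n 1 j) =
      (Finset.univ.filter (fun k : Fin n => k.val ∈ Finset.Ico 1 (j-1))).card := by
    unfold hammingDist
    congr 1
    apply Finset.filter_congr
    intro k _
    simp only [stdVec, Finset.mem_Ico]
    split_ifs with h1 h2' h2' <;> simp <;> omega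
  rw [h, card_filter_val, Nat.card_Ico]
  · omega
  · intro m hm; simp [Finset.mem_Ico] at hm; omega

lemma dist_ge2 (n i j : ℕ) (h2 : 2 ≤ i) (hij : i < j) (hjn : j ≤ n) :
    hammingDist (stdVec n 1 2) (stdVec n i j) = j - i + 1 := by
  have h : hammingDist (stdVec n 1 2) (stdVec n i j) =
      (Finset.univ.filter (fun k : Fin n => k.val ∈ insert 0 (Finset.Ico (i-1) (j-1)))).card := by
    unfold hammingDist
    congr 1
    apply Finset.filter_congr
    intro k _
    simp only [stdVec, Finset.mem_insert, Finset.mem_Ico]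
    split_ifs with h1 h2' h2' <;> simp <;> omega
  rw [h, card_filter_val, Finset.card_insert_of_notMem, Nat.card_Ico]
  · omega
  · simp [Finset.mem_Ico]; omega
  · intro m hm; simp [Finset.mem_Ico] at hm; rcases hm with h | h <;> omega

theorem stmt_9 (n : ℕ) (hn : 6 ≤ n) :
    (stdFamily n).filter (fun w => hdelta (stdVec n 1 2) w = 1) =
      {0, stdVec n 1 3, stdVec n 2 n} := by
  ext w
  simp only [Finset.mem_filter, stdFamily, Finset.mem_insert, Finset.mem_image,
    Finset.mem_singleton, Finset.mem_filter, Finset.mem_product, Finset.mem_Icc]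
  constructor
  · rintro ⟨h0 | ⟨⟨i, j⟩, ⟨⟨⟨hi1, hin⟩, hj1, hjn⟩, hij⟩, rfl⟩, hd⟩
    · exact Or.inl h0
    · dsimp only at hij hi1 hin hj1 hjn hd ⊢
      rcases eq_or_lt_of_le hi1 with hi | hi
      · subst hi
        rw [hdelta, stdVec_dist_one n j (by omega) hjn] at hd
        have hj3 : j = 3 := by omega
        subst hj3; exact Or.inr (Or.inl rfl)
      · rw [hdelta, dist_ge2 n i j (by omega) hij hjn] at hd
        have : i = 2 ∧ j = n := by omega
        obtain ⟨rfl, rfl⟩ := this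
        exact Or.inr (Or.inr rfl)
  · rintro (rfl | rfl | rfl)
    · refine ⟨Or.inl rfl, ?_⟩
      rw [hdelta, stdVec_dist_zero n (by omega)]; omega
    · refine ⟨Or.inr ⟨(1, 3), by simp; omega, rfl⟩, ?_⟩
      rw [hdelta, stdVec_dist_one n 3 (by omega) (by omega)]; omega
    · refine ⟨Or.inr ⟨(2, n), by simp; omega, rfl⟩, ?_⟩
      rw [hdelta, dist_ge2 n 2 n (by omega) (by omega) (by omega)]; omega
end

section
/- Let n ≥ 6 be an integer and let i satisfy 1 < i and i + 1 < n. Then the set of elements w of the standard family Fₙ with δ(v_{i,n}, w) = 1 is exactly {v_{i,n−1}, v_{i−1,n}, v_{i+1,n}, v_{1,i}}, where δ(v,w) := min(d(v,w), n − d(v,w)) and d is the Hamming distance. -/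
lemma ham (n i j a b : ℕ) (hi : 1 ≤ i) (hj : j ≤ n) (ha : 1 ≤ a) (hb : b ≤ n) :
    hammingDist (stdVec n i j) (stdVec n a b)
      = ((j-1) - (i-1) - (min (j-1) (b-1) - max (i-1) (a-1)))
        + ((b-1) - (a-1) - (min (j-1) (b-1) - max (i-1) (a-1))) := by
  classical
  set A := Finset.Ico (i-1) (j-1) with hA
  set B := Finset.Ico (a-1) (b-1) with hB
  have hlt : ∀ m ∈ A \ B ∪ B \ A, m < n := by
    intro m hm
    simp only [hA, hB, Finset.mem_union, Finset.mem_sdiff, Finset.mem_Ico] at hm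
    omega
  have hfilt : ({k | stdVec n i j k ≠ stdVec n a b k} : Finset (Fin n))
      = (A \ B ∪ B \ A).attachFin hlt := by
    ext k
    rw [Finset.mem_filter]
    simp only [Finset.mem_filter, Finset.mem_univ, true_and, Finset.mem_attachFin,
      Finset.mem_union, Finset.mem_sdiff, hA, hB, Finset.mem_Ico, stdVec]
    split_ifs with h1 h2 h2 <;> simp <;> omega
  rw [hammingDist, hfilt, Finset.card_attachFin,
    Finset.card_union_of_disjoint (disjoint_sdiff_sdiff)]
  have h1 : (A \ B).card + (A ∩ B).card = A.card := Finset.card_sdiff_add_card_inter A B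
  have h2 : (B \ A).card + (B ∩ A).card = B.card := Finset.card_sdiff_add_card_inter B A
  have hAB : (A ∩ B).card = min (j-1) (b-1) - max (i-1) (a-1) := by
    rw [hA, hB, Finset.Ico_inter_Ico, Nat.card_Ico]
  have hBA : (B ∩ A).card = min (j-1) (b-1) - max (i-1) (a-1) := by
    rw [hA, hB, Finset.Ico_inter_Ico, Nat.card_Ico]; omega
  have hcA : A.card = (j-1) - (i-1) := Nat.card_Ico _ _
  have hcB : B.card = (b-1) - (a-1) := Nat.card_Ico _ _
  omega

lemma stdVec_one_one (n : ℕ) : stdVec n 1 1 = 0 := by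
  funext k; simp [stdVec]

set_option maxHeartbeats 1000000 in
theorem stmt_10 (n i : ℕ) (hn : 6 ≤ n) (hi : 1 < i) (hi' : i + 1 < n) :
    (stdFamily n).filter (fun w => hdelta (stdVec n i n) w = 1) =
      {stdVec n i (n - 1), stdVec n (i - 1) n, stdVec n (i + 1) n, stdVec n 1 i} := by
  ext w
  simp only [Finset.mem_filter, stdFamily, Finset.mem_insert, Finset.mem_image,
    Finset.mem_product, Finset.mem_Icc, Finset.mem_singleton]
  constructor
  · rintro ⟨h0 | ⟨⟨a, b⟩, hp, rfl⟩, hδ⟩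
    · subst h0
      rw [← stdVec_one_one n, hdelta,
        ham n i n 1 1 (by omega) le_rfl le_rfl (by omega)] at hδ
      omega
    · simp only [Finset.mem_filter, Finset.mem_product, Finset.mem_Icc] at hp
      obtain ⟨⟨⟨ha1, han⟩, hb1, hbn⟩, hab⟩ := hp
      rw [hdelta, ham n i n a b (by omega) le_rfl ha1 hbn,
        min_eq_right (by omega : b - 1 ≤ n - 1)] at hδ
      have hcases : (a = i ∧ b = n - 1) ∨ (a = i - 1 ∧ b = n) ∨
          (a = i + 1 ∧ b = n) ∨ (a = 1 ∧ b = i) := by omega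
      rcases hcases with ⟨rfl, rfl⟩ | ⟨rfl, rfl⟩ | ⟨rfl, rfl⟩ | ⟨rfl, rfl⟩ <;> simp
  · intro h
    have key : ∀ a b : ℕ, 1 ≤ a → a < b → b ≤ n → w = stdVec n a b →
        hdelta (stdVec n i n) w = 1 →
        (w = 0 ∨ ∃ p : ℕ × ℕ, (((1 ≤ p.1 ∧ p.1 ≤ n) ∧ 1 ≤ p.2 ∧ p.2 ≤ n) ∧ p.1 < p.2) ∧
          stdVec n p.1 p.2 = w) ∧
        hdelta (stdVec n i n) w = 1 := by
      intro a b ha hab hb hw hd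
      exact ⟨Or.inr ⟨(a, b), ⟨⟨⟨by omega, by omega⟩, by omega, by omega⟩, by omega⟩, hw.symm⟩, hd⟩
    rcases h with rfl | rfl | rfl | rfl
    · exact key i (n-1) (by omega) (by omega) (by omega) rfl
        (by rw [hdelta, ham n i n i (n-1) (by omega) le_rfl (by omega) (by omega)]; omega)
    · exact key (i-1) n (by omega) (by omega) le_rfl rfl
        (by rw [hdelta, ham n i n (i-1) n (by omega) le_rfl (by omega) le_rfl]; omega)
    · exact key (i+1) n (by omega) (by omega) le_rfl rfl
        (by rw [hdelta, ham n i n (i+1) n (by omega) le_rfl (by omega) le_rfl]; omega)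
    · exact key 1 i (by omega) (by omega) (by omega) rfl
        (by rw [hdelta, ham n i n 1 i (by omega) le_rfl (by omega) (by omega)]; omega)
end

section
/- Let n ≥ 6 be an integer. Then the set of elements w of the standard family Fₙ with δ(v_{1,n}, w) = 1 is exactly {0, v_{1,n−1}, v_{2,n}}, where δ(v,w) := min(d(v,w), n − d(v,w)) and d is the Hamming distance. -/
lemma ite_ne_ite (A B : Prop) [Decidable A] [Decidable B] :
    ((if A then (1 : ZMod 2) else 0) ≠ (if B then 1 else 0)) ↔ ¬(A ↔ B) := by
  split_ifs with hA hB hB <;> simp [hA, hB]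

lemma ite_ne_zero (A : Prop) [Decidable A] :
    ((if A then (1 : ZMod 2) else 0) ≠ 0) ↔ A := by
  split_ifs with hA <;> simp [hA]

lemma card_filter_fin (n : ℕ) (P : Fin n → Prop) [DecidablePred P]
    (Q : ℕ → Prop) [DecidablePred Q] (h : ∀ k : Fin n, P k ↔ Q k.val) :
    (Finset.univ.filter P).card = ((Finset.range n).filter Q).card := by
  apply Finset.card_nbij (fun k => k.val)
  · intro k hk
    simp only [Finset.coe_filter, Finset.mem_coe, Set.mem_setOf_eq, Finset.mem_filter, Finset.mem_univ, true_and] at hk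
    simp [Finset.mem_filter, k.isLt, (h k).mp hk]
  · intro a ha b hb hab
    exact Fin.val_injective hab
  · intro a ha
    simp only [Finset.coe_filter, Finset.mem_range, Set.mem_setOf_eq] at ha
    exact ⟨⟨a, ha.1⟩, by simp [h, ha.2], rfl⟩

lemma hd_zero (n : ℕ) (hn : 2 ≤ n) : hammingDist (stdVec n 1 n) (0 : Fin n → ZMod 2) = n - 1 := by
  rw [hammingDist]
  have := card_filter_fin n (fun k => stdVec n 1 n k ≠ (0 : Fin n → ZMod 2) k)
    (fun a => a + 1 < n) (by
      intro k
      simp only [stdVec, Pi.zero_apply, ite_ne_zero]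
      omega)
  rw [this]
  have : (Finset.range n).filter (fun a => a + 1 < n) = Finset.range (n - 1) := by
    ext a; simp only [Finset.mem_filter, Finset.mem_range]; omega
  rw [this, Finset.card_range]

lemma hd_ij (n i j : ℕ) (hi : 1 ≤ i) (hij : i < j) (hjn : j ≤ n) :
    hammingDist (stdVec n 1 n) (stdVec n i j) = n - 1 - (j - i) := by
  rw [hammingDist]
  have := card_filter_fin n (fun k => stdVec n 1 n k ≠ stdVec n i j k)
    (fun a => a + 1 < n ∧ ¬(i ≤ a + 1 ∧ a + 1 < j)) (by
      intro k
      simp only [stdVec, ite_ne_ite]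
      omega)
  rw [this]
  have heq : (Finset.range n).filter (fun a => a + 1 < n ∧ ¬(i ≤ a + 1 ∧ a + 1 < j)) =
      Finset.range (n - 1) \ Finset.Icc (i - 1) (j - 2) := by
    ext a
    simp only [Finset.mem_filter, Finset.mem_range, Finset.mem_sdiff, Finset.mem_Icc]
    omega
  rw [heq, Finset.card_sdiff_of_subset (by
    intro a ha
    simp only [Finset.mem_Icc] at ha
    simp only [Finset.mem_range]
    omega)]
  rw [Finset.card_range, Nat.card_Icc]
  omega

theorem stmt_12 (n : ℕ) (hn : 6 ≤ n) :
    (stdFamily n).filter (fun w => hdelta (stdVec n 1 n) w = 1) =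
      {0, stdVec n 1 (n - 1), stdVec n 2 n} := by
  ext w
  simp only [Finset.mem_filter, stdFamily, Finset.mem_insert, Finset.mem_image,
    Finset.mem_filter, Finset.mem_product, Finset.mem_Icc, Prod.exists,
    Finset.mem_singleton]
  constructor
  · rintro ⟨h0 | ⟨i, j, ⟨⟨⟨hi1, hin⟩, hj1, hjn⟩, hij⟩, rfl⟩, hd⟩
    · exact Or.inl h0
    · rw [hdelta, hd_ij n i j hi1 hij hjn] at hd
      have : j - i = n - 2 := by omega
      have : (i = 1 ∧ j = n - 1) ∨ (i = 2 ∧ j = n) := by omega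
      rcases this with ⟨rfl, rfl⟩ | ⟨rfl, rfl⟩
      · exact Or.inr (Or.inl rfl)
      · exact Or.inr (Or.inr rfl)
  · rintro (rfl | rfl | rfl)
    · refine ⟨Or.inl rfl, ?_⟩
      rw [hdelta, hd_zero n (by omega)]
      omega
    · refine ⟨Or.inr ⟨1, n - 1, by omega, rfl⟩, ?_⟩
      rw [hdelta, hd_ij n 1 (n - 1) (by omega) (by omega) (by omega)]
      omega
    · refine ⟨Or.inr ⟨2, n, by omega, rfl⟩, ?_⟩
      rw [hdelta, hd_ij n 2 n (by omega) (by omega) (by omega)]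
      omega
end
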